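/- Let Q be a finite quiver, M a straight representation with straightening basis B, e a dimension vector, and T_M the torus acting on Gr_e(M). Then the map sending an e-dimensional successor-closed subquiver S ⊆ Q(M,B) to the coordinate subrepresentation of M spanned by the basis vectors in S₀ is a bijection from the set of e-dimensional successor-closed subquivers of Q(M,B) onto the set of T_M-fixed points of Gr_e(M). -/

import Mathlib

open scoped Classical

noncomputable section

structure FinQuiver where
  V : Type
  A : Type
  [fV : Fintype V]
  [fA : Fintype A]
  [dV : DecidableEq V]
  [dA : DecidableEq A]
  src : A → V
  tgt : A → V

attribute [instance] FinQuiver.fV FinQuiver.fA FinQuiver.dV FinQuiver.dA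

structure QuivRep (Q : FinQuiver) where
  M : Q.V → Type
  [acg : ∀ i, AddCommGroup (M i)]
  [mod : ∀ i, Module ℂ (M i)]
  [fd : ∀ i, FiniteDimensional ℂ (M i)]
  map : ∀ a : Q.A, M (Q.src a) →ₗ[ℂ] M (Q.tgt a)

attribute [instance] QuivRep.acg QuivRep.mod QuivRep.fd

def QuivRep.grass {Q : FinQuiver} (R : QuivRep Q) (e : Q.V → ℕ) :
    Set (∀ i, Submodule ℂ (R.M i)) :=
  {U | (∀ a, (U (Q.src a)).map (R.map a) ≤ U (Q.tgt a)) ∧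
    ∀ i, Module.finrank ℂ (U i) = e i}

def QuivRep.FlexAt {Q : FinQuiver} (R : QuivRep Q) (e : Q.V → ℕ) (i : Q.V) : Prop :=
  {W : Submodule ℂ (R.M i) | ∃ U ∈ R.grass e, U i = W}.Infinite

def QuivRep.Flex {Q : FinQuiver} (R : QuivRep Q) (e : Q.V → ℕ) : Prop :=
  ∀ i, R.FlexAt e i

/-- A standard basis of a direct sum of windings of trees: a basis of each `M^(i)` such
that every `M_a` sends each basis vector either to zero or to a nonzero scalar multiple
of a basis vector, and (winding condition) no two basis vectors are sent by `M_a` to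
multiples of the same basis vector. -/
structure ForestBasis {Q : FinQuiver} (R : QuivRep Q) where
  κ : Q.V → Type
  [fκ : ∀ i, Fintype (κ i)]
  [dκ : ∀ i, DecidableEq (κ i)]
  bas : ∀ i, Module.Basis (κ i) ℂ (R.M i)
  next : ∀ a : Q.A, κ (Q.src a) → Option (κ (Q.tgt a))
  coef : ∀ a : Q.A, κ (Q.src a) → ℂ
  map_bas : ∀ a k, R.map a (bas (Q.src a) k) =
      Option.elim (next a k) 0 fun k' => coef a k • bas (Q.tgt a) k'
  coef_ne : ∀ a k, (next a k).isSome → coef a k ≠ 0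
  next_inj : ∀ a k l, (next a k).isSome → next a k = next a l → k = l

attribute [instance] ForestBasis.fκ ForestBasis.dκ

namespace ForestBasis

variable {Q : FinQuiver} {R : QuivRep Q} (F : ForestBasis R)

/-- The set of all basis vectors (the vertex set of the coefficient quiver). -/
abbrev B := Σ i : Q.V, F.κ i

instance : Fintype F.B := by unfold ForestBasis.B; infer_instance

/-- Adjacency in the coefficient quiver `Q(M,B)`. -/
def adj (p q : F.B) : Prop :=
  ∃ (a : Q.A) (k : F.κ (Q.src a)) (k' : F.κ (Q.tgt a)),
    F.next a k = some k' ∧ p = ⟨Q.src a, k⟩ ∧ q = ⟨Q.tgt a, k'⟩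

/-- The number of connected components of the coefficient quiver; for a forest this is
the number of indecomposable direct summands of `M`. -/
def numComp : ℕ := Nat.card (Quot F.adj)

/-- The coefficient quiver is a forest: the number of vertices equals the number of
edges plus the number of connected components (i.e. every component is a tree). -/
def IsForest : Prop :=
  Fintype.card F.B =
    Nat.card {e : Σ a : Q.A, F.κ (Q.src a) // (F.next e.1 e.2).isSome} + F.numComp

/-- The linear automorphism of `M^(i)` induced by a grading `wt` and `z ∈ ℂ*`:
each basis vector `b` is scaled by `z ^ wt b`. -/
def gradeMap (wt : F.B → ℤ) (z : ℂˣ) (i : Q.V) : R.M i →ₗ[ℂ] R.M i :=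
  (F.bas i).constr ℂ fun k => ((z ^ wt ⟨i, k⟩ : ℂˣ) : ℂ) • F.bas i k

/-- The induced action of `z ∈ ℂ*` on tuples of subspaces. -/
def gact (wt : F.B → ℤ) (z : ℂˣ) (U : ∀ i, Submodule ℂ (R.M i)) :
    ∀ i, Submodule ℂ (R.M i) :=
  fun i => (U i).map (F.gradeMap wt z i)

/-- A grading is `e`-admissible if its `ℂ*`-action preserves the quiver Grassmannian. -/
def Admissible (e : Q.V → ℕ) (wt : F.B → ℤ) : Prop :=
  ∀ (z : ℂˣ), ∀ U ∈ R.grass e, F.gact wt z U ∈ R.grass e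

/-- A grading is constructible if every arrow has a fixed weight. -/
def Constructible (wt : F.B → ℤ) : Prop :=
  ∃ wtA : Q.A → ℤ, ∀ (a : Q.A) (k : F.κ (Q.src a)) (k' : F.κ (Q.tgt a)),
    F.next a k = some k' → wt ⟨Q.tgt a, k'⟩ = wt ⟨Q.src a, k⟩ + wtA a

/-- The action of a higher-rank torus obtained by combining several gradings. -/
def mgradeMap {r : ℕ} (w : Fin r → (F.B → ℤ)) (t : Fin r → ℂˣ) (i : Q.V) :
    R.M i →ₗ[ℂ] R.M i :=
  (F.bas i).constr ℂ fun k => ((∏ j, t j ^ w j ⟨i, k⟩ : ℂˣ) : ℂ) • F.bas i k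

def mgact {r : ℕ} (w : Fin r → (F.B → ℤ)) (t : Fin r → ℂˣ)
    (U : ∀ i, Submodule ℂ (R.M i)) : ∀ i, Submodule ℂ (R.M i) :=
  fun i => (U i).map (F.mgradeMap w t i)

/-- The torus `(ℂ*)^r` acts faithfully on `Gr_e(M)` via the gradings `w`. -/
def Faithful {r : ℕ} (e : Q.V → ℕ) (w : Fin r → (F.B → ℤ)) : Prop :=
  ∀ t : Fin r → ℂˣ, (∀ U ∈ R.grass e, F.mgact w t U = U) → t = 1

end ForestBasis

end

noncomputable section

/-- The supporting arrows of `M`: arrows of `Q` on which `M` is nonzero. -/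
abbrev QuivRep.SuppA {Q : FinQuiver} (R : QuivRep Q) := {a : Q.A // R.map a ≠ 0}

/-- Extension by `1` on non-supporting arrows of a tuple indexed by supporting arrows. -/
def QuivRep.nuExt {Q : FinQuiver} (R : QuivRep Q) (ν : R.SuppA → ℂˣ) (a : Q.A) : ℂˣ :=
  if h : R.map a ≠ 0 then ν ⟨a, h⟩ else 1

/-- A straightening basis for a representation `M`: a basis of `⊕ᵢ M^(i)` whose
coefficient quiver is a disjoint union of `d` equioriented strings ("segments").
The `j`-th segment has `len j` basis vectors `b_{j,0}, …, b_{j,len j - 1}`, the vector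
`b_{j,k}` lies over the vertex `vtx j k` of `Q`, and for `k+1 < len j` the arrow
`arrOf j k` of `Q` carries `b_{j,k}` to `b_{j,k+1}`; all other structure maps vanish
on basis vectors. -/
structure StraightBasis {Q : FinQuiver} (R : QuivRep Q) where
  d : ℕ
  len : Fin d → ℕ
  len_pos : ∀ j, 0 < len j
  vtx : (j : Fin d) → Fin (len j) → Q.V
  arrOf : (j : Fin d) → Fin (len j) → Q.A
  arr_src : ∀ (j : Fin d) (k : Fin (len j)), (k : ℕ) + 1 < len j →
    Q.src (arrOf j k) = vtx j k
  arr_tgt : ∀ (j : Fin d) (k : Fin (len j)) (h : (k : ℕ) + 1 < len j),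
    Q.tgt (arrOf j k) = vtx j ⟨(k : ℕ) + 1, h⟩
  bas : ∀ i, Module.Basis {p : Σ j : Fin d, Fin (len j) // vtx p.1 p.2 = i} ℂ (R.M i)
  map_bas : ∀ (a : Q.A) (p : {p : Σ j : Fin d, Fin (len j) // vtx p.1 p.2 = Q.src a}),
      R.map a (bas (Q.src a) p) =
        if h : (p.1.2 : ℕ) + 1 < len p.1.1 ∧ arrOf p.1.1 p.1.2 = a then
          bas (Q.tgt a) ⟨⟨p.1.1, ⟨(p.1.2 : ℕ) + 1, h.1⟩⟩,
            (arr_tgt p.1.1 p.1.2 h.1).symm.trans (congrArg Q.tgt h.2)⟩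
        else 0

/-- `M` is straight if it admits a straightening basis. -/
def QuivRep.IsStraight {Q : FinQuiver} (R : QuivRep Q) : Prop :=
  Nonempty (StraightBasis R)

namespace StraightBasis

variable {Q : FinQuiver} {R : QuivRep Q} (S : StraightBasis R)

/-- The set of basis vectors: the vertex set of the coefficient quiver. -/
abbrev B (S : StraightBasis R) := Σ j : Fin S.d, Fin (S.len j)

instance : Fintype S.B := by unfold StraightBasis.B; infer_instance

/-- The vertex of `Q` over which a basis vector lies. -/
def over' (p : S.B) : Q.V := S.vtx p.1 p.2

/-- The fibre of the basis over a vertex of `Q`. -/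
abbrev fiber (i : Q.V) := {p : S.B // S.over' p = i}

/-- The basis vector corresponding to `p`. -/
def bv (p : S.B) : R.M (S.over' p) := S.bas (S.over' p) ⟨p, rfl⟩

/-- The successor of a basis vector in the coefficient quiver (if any). -/
def succOf (p : S.B) : Option S.B :=
  if h : (p.2 : ℕ) + 1 < S.len p.1 then some ⟨p.1, ⟨(p.2 : ℕ) + 1, h⟩⟩ else none

/-- The predecessor of a basis vector in the coefficient quiver (if any). -/
def predOf (p : S.B) : Option S.B :=
  if _ : 0 < (p.2 : ℕ) then
    some ⟨p.1, ⟨(p.2 : ℕ) - 1, lt_of_le_of_lt (Nat.sub_le _ _) p.2.isLt⟩⟩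
  else none

/-- The torus `T_M = (ℂ*)^{d+c}`: one coordinate `γ_j` for each segment and one
coordinate `ν_a` for each arrow `a` of `Q` in the support of `M`. -/
abbrev Torus (S : StraightBasis R) := (Fin S.d → ℂˣ) × (R.SuppA → ℂˣ)



/-- The character by which a torus element scales the basis vector `p`: the initial
coordinate `γ_j` of its segment times the product of the `ν`'s along the arrows of the
segment preceding `p`. -/
def twt (t : S.Torus) (p : S.B) : ℂˣ :=
  t.1 p.1 * ∏ m ∈ (Finset.range (p.2 : ℕ)).attach,
    R.nuExt t.2 (S.arrOf p.1 ⟨m.1, lt_trans (Finset.mem_range.mp m.2) p.2.isLt⟩)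

/-- The linear action of a torus element on `M^(i)`. -/
def tmap (t : S.Torus) (i : Q.V) : R.M i →ₗ[ℂ] R.M i :=
  (S.bas i).constr ℂ fun p => ((S.twt t p.1 : ℂˣ) : ℂ) • S.bas i p

/-- The action of the torus `T_M` on tuples of subspaces. -/
def tact (t : S.Torus) (U : ∀ i, Submodule ℂ (R.M i)) : ∀ i, Submodule ℂ (R.M i) :=
  fun i => (U i).map (S.tmap t i)

/-- The `T_M`-fixed points of the quiver Grassmannian. -/
def fixedPts (e : Q.V → ℕ) : Set (∀ i, Submodule ℂ (R.M i)) :=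
  {U | U ∈ R.grass e ∧ ∀ t : S.Torus, S.tact t U = U}

/-- The `T_M`-orbit of a point. -/
def orbit (U : ∀ i, Submodule ℂ (R.M i)) : Set (∀ i, Submodule ℂ (R.M i)) :=
  {W | ∃ t : S.Torus, W = S.tact t U}

/-- The (algebraic) cocharacter of `T_M` given by a pair of integer vectors. -/
def cochar (mγ : Fin S.d → ℤ) (mν : R.SuppA → ℤ) (z : ℂˣ) : S.Torus :=
  (fun j => z ^ mγ j, fun a => z ^ mν a)

/-- A subset `O` of the quiver Grassmannian is a one-dimensional `T_M`-orbit if it is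
the orbit of a point of `Gr_e(M)`, is infinite, and coincides with the orbit of any of
its points under a single cocharacter of `T_M`. -/
def IsOneDimOrbitIn (e : Q.V → ℕ) (O : Set (∀ i, Submodule ℂ (R.M i))) : Prop :=
  (∃ U ∈ R.grass e, O = S.orbit U) ∧ O.Infinite ∧
  ∀ x ∈ O, ∃ (mγ : Fin S.d → ℤ) (mν : R.SuppA → ℤ),
    O = {W | ∃ z : ℂˣ, W = S.tact (S.cochar mγ mν z) x}

/-- The coordinate subrepresentation spanned by the basis vectors in `K`. -/
def coordSub (K : Set S.B) : ∀ i, Submodule ℂ (R.M i) :=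
  fun i => Submodule.span ℂ (⇑(S.bas i) '' {q : S.fiber i | q.1 ∈ K})

/-- The set of basis vectors lying in a given coordinate subrepresentation. -/
def coordSet (V : ∀ i, Submodule ℂ (R.M i)) : Set S.B :=
  {p | S.bv p ∈ V (S.over' p)}

/-- A subset of the basis is successor closed if it is closed under taking successors
in the coefficient quiver. -/
def SuccClosed (K : Set S.B) : Prop :=
  ∀ p ∈ K, ∀ q, S.succOf p = some q → q ∈ K

/-- A subset of the basis is `e`-dimensional if it has `e i` elements over each
vertex `i` of `Q`. -/
def EDim (e : Q.V → ℕ) (K : Set S.B) : Prop :=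
  ∀ i, Nat.card {p : S.B // p ∈ K ∧ S.over' p = i} = e i

/-- The `ℂ*`-action on `M^(i)` induced by a grading of the basis. -/
def zmap (wt : S.B → ℤ) (z : ℂˣ) (i : Q.V) : R.M i →ₗ[ℂ] R.M i :=
  (S.bas i).constr ℂ fun p => ((z ^ wt p.1 : ℂˣ) : ℂ) • S.bas i p

/-- The `ℂ*`-action on tuples of subspaces induced by a grading. -/
def zact (wt : S.B → ℤ) (z : ℂˣ) (U : ∀ i, Submodule ℂ (R.M i)) :
    ∀ i, Submodule ℂ (R.M i) :=
  fun i => (U i).map (S.zmap wt z i)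

/-- The position of a basis vector in a chosen ordering of its fibre. -/
def ordIdx (ord : ∀ i, S.fiber i ≃ Fin (Fintype.card (S.fiber i))) (p : S.B) : ℕ :=
  (ord (S.over' p) ⟨p, rfl⟩ : ℕ)

/-- (SA1): over each arrow, endpoints of segments come later in the order than basis
vectors with outgoing arrows. -/
def SA1 (ord : ∀ i, S.fiber i ≃ Fin (Fintype.card (S.fiber i))) : Prop :=
  ∀ (a : Q.A) (p q : S.fiber (Q.src a)),
    R.map a (S.bas (Q.src a) p) = 0 → R.map a (S.bas (Q.src a) q) ≠ 0 →
      S.ordIdx ord q.1 < S.ordIdx ord p.1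

/-- (SA2): over each arrow, the structure maps are order preserving. -/
def SA2 (ord : ∀ i, S.fiber i ≃ Fin (Fintype.card (S.fiber i))) : Prop :=
  ∀ (a : Q.A) (p q : S.fiber (Q.src a)) (p' q' : S.fiber (Q.tgt a)),
    R.map a (S.bas (Q.src a) p) = S.bas (Q.tgt a) p' →
    R.map a (S.bas (Q.src a) q) = S.bas (Q.tgt a) q' →
      S.ordIdx ord q.1 < S.ordIdx ord p.1 → S.ordIdx ord q'.1 < S.ordIdx ord p'.1

/-- (AG1): within each fibre, the grading strictly increases with the order. -/
def AG1 (ord : ∀ i, S.fiber i ≃ Fin (Fintype.card (S.fiber i))) (wt : S.B → ℤ) : Prop :=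
  ∀ (i : Q.V) (p q : S.fiber i), S.ordIdx ord q.1 < S.ordIdx ord p.1 → wt q.1 < wt p.1

/-- (AG2): each arrow of `Q` has a fixed weight for the grading. -/
def AG2 (wt : S.B → ℤ) (wtA : Q.A → ℤ) : Prop :=
  ∀ (a : Q.A) (p : S.fiber (Q.src a)) (p' : S.fiber (Q.tgt a)),
    R.map a (S.bas (Q.src a) p) = S.bas (Q.tgt a) p' → wt p'.1 = wt p.1 + wtA a

/-- The lowest-weight component of a vector `u ∈ M^(i)` with respect to a grading. -/
def lead (wt : S.B → ℤ) (i : Q.V) (u : R.M i) : R.M i :=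
  if h : (((S.bas i).repr u).support).Nonempty then
    ∑ p ∈ ((S.bas i).repr u).support.filter
        (fun p => wt p.1 =
          ((((S.bas i).repr u).support.image fun q => wt q.1).min' (h.image _))),
      ((S.bas i).repr u) p • S.bas i p
  else 0

/-- The Bialynicki-Birula limit `lim_{z→0} z.U` of a tuple of subspaces under the
`ℂ*`-action induced by the grading `wt`: the span of the lowest-weight components of
the nonzero vectors. -/
def bblim (wt : S.B → ℤ) (U : ∀ i, Submodule ℂ (R.M i)) : ∀ i, Submodule ℂ (R.M i) :=
  fun i => Submodule.span ℂ {v | ∃ u ∈ U i, u ≠ 0 ∧ v = S.lead wt i u}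

/-- The attracting set of a fixed point `V` for the `ℂ*`-action induced by `wt`. -/
def attrSet (wt : S.B → ℤ) (e : Q.V → ℕ) (V : ∀ i, Submodule ℂ (R.M i)) :
    Set (∀ i, Submodule ℂ (R.M i)) :=
  {U | U ∈ R.grass e ∧ S.bblim wt U = V}

/-- The pair `(p, q)` is an *initial parameter* `μ^{(i)}_{ℓ,k}` (`k ↔ p ∈ K`,
`ℓ ↔ q ∉ K`) for the coordinate subrepresentation given by `K`. -/
def IsInitial (ord : ∀ i, S.fiber i ≃ Fin (Fintype.card (S.fiber i)))
    (K : Set S.B) (p q : S.B) : Prop :=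
  p ∈ K ∧ q ∉ K ∧ S.over' p = S.over' q ∧ S.ordIdx ord p < S.ordIdx ord q ∧
  (S.predOf p = none ∨ ∃ p₀, S.predOf p = some p₀ ∧ p₀ ∉ K) ∧
  (∀ q', S.succOf q = some q' → q' ∉ K →
    ∃ p', S.succOf p = some p' ∧ S.over' p' = S.over' q')

/-- The number of initial parameters of the coordinate subrepresentation given by `K`. -/
def numInitial (ord : ∀ i, S.fiber i ≃ Fin (Fintype.card (S.fiber i)))
    (K : Set S.B) : ℕ :=
  Nat.card {pq : S.B × S.B // S.IsInitial ord K pq.1 pq.2}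

end StraightBasis

end

/-! The torus `T_M` acts on each `M^(i)` by operators that are diagonal in the basis `B`, and its
characters separate the basis vectors: the `γ_j` separate segments, and a common value of the
`ν`'s separates the positions within a segment. A subspace stable under a family of diagonal
operators with separating characters is spanned by the basis vectors it contains, so the
`T_M`-fixed points are exactly the coordinate subrepresentations. A coordinate subspace is a
subrepresentation iff its set of basis vectors is successor closed, and its dimension over `i` is
the number of those basis vectors lying over `i`. -/

namespace Module.Basis

variable {ι K V : Type*} [Field K] [AddCommGroup V] [Module K V] (b : Basis ι K V)

theorem repr_apply_of_forall_apply_eq_smul {f : V →ₗ[K] V} {c : ι → K}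
    (hf : ∀ i, f (b i) = c i • b i) (v : V) (i : ι) :
    b.repr (f v) i = c i * b.repr v i := by
  have h : Finsupp.lapply i ∘ₗ b.repr.toLinearMap ∘ₗ f =
      c i • (Finsupp.lapply i ∘ₗ b.repr.toLinearMap) := by
    refine b.ext fun j => ?_
    by_cases hij : j = i
    · subst hij; simp [hf]
    · simp [hf, Ne.symm hij]
  simpa using congr($h v)

theorem repr_smul_mem_of_forall_mapsTo {T : Type*} {f : T → V →ₗ[K] V} {c : T → ι → K}
    (hf : ∀ t i, f t (b i) = c t i • b i) (hc : ∀ i j, i ≠ j → ∃ t, c t i ≠ c t j)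
    {U : Submodule K V} (hU : ∀ t, ∀ v ∈ U, f t v ∈ U) {v : V} (hv : v ∈ U) (i : ι) :
    b.repr v i • b i ∈ U := by
  induction hn : (b.repr v).support.card using Nat.strong_induction_on generalizing v with
  | _ n ih =>
  by_cases hsub : (b.repr v).support ⊆ {i}
  · have hvi : v = b.repr v i • b i := by
      apply b.repr.injective
      rw [map_smul, repr_self, Finsupp.smul_single_one]
      exact Finsupp.support_subset_singleton.1 hsub
    exact hvi ▸ hv
  obtain ⟨j, hj, hji⟩ := Finset.not_subset.1 hsub
  obtain ⟨t, ht⟩ := hc i j (Ne.symm (Finset.notMem_singleton.1 hji))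
  -- Applying `f t - c t j` kills the `j`-coordinate and rescales the `i`-coordinate.
  set w := f t v - c t j • v
  have hw : w ∈ U := U.sub_mem (hU t v hv) (U.smul_mem _ hv)
  have hrepr : ∀ k, b.repr w k = (c t k - c t j) * b.repr v k := fun k => by
    simp only [w, map_sub, map_smul, Finsupp.sub_apply, Finsupp.smul_apply, smul_eq_mul,
      b.repr_apply_of_forall_apply_eq_smul (hf t), sub_mul]
  have hsupp : (b.repr w).support ⊂ (b.repr v).support := by
    refine Finset.ssubset_iff_of_subset (fun k hk => ?_) |>.2 ⟨j, hj, ?_⟩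
    · rw [Finsupp.mem_support_iff, hrepr] at hk
      exact Finsupp.mem_support_iff.2 (right_ne_zero_of_mul hk)
    · simp [hrepr]
  have := ih _ (hn ▸ Finset.card_lt_card hsupp) hw rfl
  rwa [hrepr, mul_smul, Submodule.smul_mem_iff _ (sub_ne_zero.2 ht)] at this

theorem eq_span_image_of_forall_mapsTo {T : Type*} {f : T → V →ₗ[K] V} {c : T → ι → K}
    (hf : ∀ t i, f t (b i) = c t i • b i) (hc : ∀ i j, i ≠ j → ∃ t, c t i ≠ c t j)
    {U : Submodule K V} (hU : ∀ t, ∀ v ∈ U, f t v ∈ U) :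
    U = Submodule.span K (b '' {i | b i ∈ U}) := by
  refine le_antisymm (fun v hv => b.mem_span_image.2 fun i hi => ?_) ?_
  · have := b.repr_smul_mem_of_forall_mapsTo hf hc hU hv i
    exact (Submodule.smul_mem_iff _ (Finsupp.mem_support_iff.1 hi)).1 this
  · rw [Submodule.span_le, Set.image_subset_iff]
    exact fun i hi => hi

theorem finrank_span_image (s : Set ι) [Finite s] :
    Module.finrank K (Submodule.span K (b '' s)) = Nat.card s := by
  have := Fintype.ofFinite s
  rw [Set.image_eq_range, finrank_span_eq_card (b := fun i : s => b i)
    (b.linearIndependent.comp _ Subtype.val_injective), Nat.card_eq_fintype_card]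

end Module.Basis

theorem Submodule.map_span_image_of_forall_apply_eq_smul {ι K V : Type*} [Field K]
    [AddCommGroup V] [Module K V] {v : ι → V} {f : V →ₗ[K] V} {c : ι → K}
    (hc : ∀ i, c i ≠ 0) (hf : ∀ i, f (v i) = c i • v i) (s : Set ι) :
    (Submodule.span K (v '' s)).map f = Submodule.span K (v '' s) := by
  rw [Submodule.map_span, ← Set.image_comp]
  refine Submodule.span_eq_span ?_ ?_ <;> rintro _ ⟨i, hi, rfl⟩
  · rw [Function.comp_apply, hf]
    exact Submodule.smul_mem _ _ (Submodule.subset_span ⟨i, hi, rfl⟩)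
  · have : c i • v i ∈ Submodule.span K ((f ∘ v) '' s) :=
      hf i ▸ Submodule.subset_span ⟨i, hi, rfl⟩
    exact (Submodule.smul_mem_iff _ (hc i)).1 this

namespace StraightBasis

variable {Q : FinQuiver} {R : QuivRep Q} (S : StraightBasis R)

lemma map_arrOf_ne_zero (j : Fin S.d) (k : Fin (S.len j)) (h : (k : ℕ) + 1 < S.len j) :
    R.map (S.arrOf j k) ≠ 0 := by
  intro h0
  have hmb := S.map_bas (S.arrOf j k) ⟨⟨j, k⟩, (S.arr_src j k h).symm⟩
  rw [dif_pos ⟨h, rfl⟩, h0] at hmb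
  exact (S.bas _).ne_zero _ hmb.symm

lemma twt_one_const (z : ℂˣ) (p : S.B) : S.twt (1, fun _ => z) p = z ^ (p.2 : ℕ) := by
  have hz : ∀ m ∈ (Finset.range (p.2 : ℕ)).attach, R.nuExt (fun _ => z)
      (S.arrOf p.1 ⟨m.1, (Finset.mem_range.1 m.2).trans p.2.isLt⟩) = z := fun m _ =>
    dif_pos (S.map_arrOf_ne_zero p.1 _ (Nat.lt_of_le_of_lt (Finset.mem_range.1 m.2) p.2.isLt))
  simp [twt, Finset.prod_congr rfl hz]

lemma twt_const_one (γ : Fin S.d → ℂˣ) (p : S.B) : S.twt (γ, fun _ => 1) p = γ p.1 := by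
  simp [twt, QuivRep.nuExt]

lemma twt_separates {p q : S.B} (h : p ≠ q) : ∃ t : S.Torus, S.twt t p ≠ S.twt t q := by
  obtain ⟨j, k⟩ := p
  obtain ⟨j', k'⟩ := q
  let two : ℂˣ := Units.mk0 2 two_ne_zero
  by_cases hj : j = j'
  · subst hj
    refine ⟨(1, fun _ => two), fun hpow => h ?_⟩
    rw [twt_one_const, twt_one_const] at hpow
    have hval := congrArg Units.val hpow
    simp only [Units.val_pow_eq_pow_val, two, Units.val_mk0] at hval
    have : (2 : ℕ) ^ (k : ℕ) = 2 ^ (k' : ℕ) := by exact_mod_cast hval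
    rw [Fin.ext (Nat.pow_right_injective le_rfl this)]
  · refine ⟨(Pi.mulSingle j two, fun _ => 1), fun hγ => ?_⟩
    rw [twt_const_one, twt_const_one, Pi.mulSingle_eq_same, Pi.mulSingle_eq_of_ne' hj] at hγ
    have : (2 : ℂ) = 1 := congrArg Units.val hγ
    norm_num at this

lemma tmap_bas (t : S.Torus) (i : Q.V) (q : {p : S.B // S.vtx p.1 p.2 = i}) :
    S.tmap t i (S.bas i q) = (S.twt t q.1 : ℂ) • S.bas i q := by
  rw [tmap, Module.Basis.constr_basis]

lemma mem_coordSet_iff {U : ∀ i, Submodule ℂ (R.M i)} {i : Q.V} (q : S.fiber i) :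
    q.1 ∈ S.coordSet U ↔ S.bas i q ∈ U i := by
  obtain ⟨p, rfl⟩ := q
  rfl

lemma coordSet_coordSub (K : Set S.B) : S.coordSet (S.coordSub K) = K :=
  Set.ext fun p => (S.bas (S.over' p)).self_mem_span_image (i := ⟨p, rfl⟩)

lemma tact_coordSub (t : S.Torus) (K : Set S.B) : S.tact t (S.coordSub K) = S.coordSub K :=
  funext fun i => Submodule.map_span_image_of_forall_apply_eq_smul
    (fun q => Units.ne_zero (S.twt t q.1)) (S.tmap_bas t i) _

lemma finrank_coordSub (K : Set S.B) (i : Q.V) :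
    Module.finrank ℂ (S.coordSub K i) = Nat.card {p : S.B // p ∈ K ∧ S.over' p = i} := by
  rw [coordSub, Module.Basis.finrank_span_image]
  exact Nat.card_congr ((Equiv.subtypeSubtypeEquivSubtypeInter _ (· ∈ K)).trans
    (Equiv.subtypeEquivRight fun _ => and_comm))

lemma map_coordSub_le {K : Set S.B} (hK : S.SuccClosed K) (a : Q.A) :
    (S.coordSub K (Q.src a)).map (R.map a) ≤ S.coordSub K (Q.tgt a) := by
  rw [coordSub, Submodule.map_span, Submodule.span_le]
  rintro _ ⟨_, ⟨q, hq, rfl⟩, rfl⟩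
  rw [S.map_bas a q]
  split_ifs with h
  · exact Submodule.subset_span ⟨_, hK q.1 hq _ (by rw [succOf, dif_pos h.1]), rfl⟩
  · exact zero_mem _

lemma succClosed_coordSet {U : ∀ i, Submodule ℂ (R.M i)}
    (hU : ∀ a, (U (Q.src a)).map (R.map a) ≤ U (Q.tgt a)) : S.SuccClosed (S.coordSet U) := by
  intro p hp q hq
  rw [succOf] at hq
  split_ifs at hq with h
  cases hq
  let p' : {r : S.B // S.vtx r.1 r.2 = Q.src (S.arrOf p.1 p.2)} :=
    ⟨p, (S.arr_src p.1 p.2 h).symm⟩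
  have hmap := hU _ (Submodule.mem_map_of_mem ((S.mem_coordSet_iff p').1 hp))
  rw [S.map_bas, dif_pos ⟨h, rfl⟩] at hmap
  exact (S.mem_coordSet_iff _).2 hmap

lemma coordSub_coordSet {U : ∀ i, Submodule ℂ (R.M i)} (hU : ∀ t : S.Torus, S.tact t U = U) :
    S.coordSub (S.coordSet U) = U := by
  funext i
  have hinv : ∀ t : S.Torus, ∀ v ∈ U i, S.tmap t i v ∈ U i := fun t v hv =>
    congr_fun (hU t) i ▸ Submodule.mem_map_of_mem hv
  rw [(S.bas i).eq_span_image_of_forall_mapsTo (S.tmap_bas · i)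
    (fun p q h => S.twt_separates (mt Subtype.ext h) |>.imp fun _ => mt Units.ext) hinv]
  simp_rw [coordSub, S.mem_coordSet_iff]
  rfl

end StraightBasis

/-- Let `M` be a straight representation with straightening basis `B`
and `e` a dimension vector.  The map sending an `e`-dimensional successor-closed
subquiver `S ⊆ Q(M,B)` (equivalently, a successor-closed subset `K` of the basis with
`e i` elements over each vertex `i`) to the coordinate subrepresentation spanned by its
vertices is a bijection onto the set of `T_M`-fixed points of `Gr_e(M)`. -/
theorem fixed_points_successor_closed {Q : FinQuiver} {R : QuivRep Q}
    (S : StraightBasis R) (e : Q.V → ℕ) :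
    Set.BijOn S.coordSub {K : Set S.B | S.SuccClosed K ∧ S.EDim e K}
      (S.fixedPts e) := by
  refine Set.InvOn.bijOn (f' := S.coordSet) ⟨fun K _ => S.coordSet_coordSub K,
    fun U hU => S.coordSub_coordSet hU.2⟩ ?_ ?_
  · rintro K ⟨hK, hdim⟩
    refine ⟨⟨S.map_coordSub_le hK, fun i => ?_⟩, fun t => S.tact_coordSub t K⟩
    rw [S.finrank_coordSub, hdim]
  · rintro U ⟨⟨hmap, hdim⟩, hfix⟩
    refine ⟨S.succClosed_coordSet hmap, fun i => ?_⟩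
    rw [← S.finrank_coordSub, S.coordSub_coordSet hfix, hdim]
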